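/- arXiv:2003.07106 — 5 statements merged into one kernel-verified Lean document; each statement's English description precedes it below -/
import Mathlib

section
/- Let (G,κ) be a capacitated graph with κ(x) ≤ d_G(x) for all x, with Z = ∅ and X independent. If for some x ∈ X there is no matching in G^aux − x saturating Y^κ, then (G,κ) has two DP-Nash subgraphs with distinct D-sets. -/
/-!
The first D-set is `X`: it is independent, so it can keep all its edges. For a second one, Hall's
theorem turns the missing matching into a nonempty `S ⊆ Y` with `κ(S) ≥ |N_X(S)|`, and a smallest
such `S` is admissible: each `y ∈ S` has at least `κ(y)` neighbours outside `S`. Take an admissible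
`S` maximising the excess `κ(S) - |N_X(S)|`, and then `|S|`. In `D = (X \ N_X(S)) ∪ S` the vertices
of `X \ N_X(S)` keep all their edges, while each `y ∈ S` must send `κ(y)` edges that together cover
`N_X(S)` and the stranded vertices of `Y \ S` (those with no neighbour in `X \ N_X(S)`). Such a
cover exists by a capacitated Hall condition, proved by induction on the set `A` to be covered. If
a stranded `q ∈ A` has at least `κ(q)` neighbours outside `S`, optimality forbids adding `q` to `S`,
so some `w ∈ S` adjacent to `q` is tight and we pass to `A \ N(w)`. Otherwise, if `A` violated the
condition, exchanging the supporters of `A` in `S` for a maximal independent set of stranded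
vertices of `A` would increase the excess.
-/

open Finset
open scoped Classical

noncomputable section

variable {V : Type*} [Fintype V]

/-- Degree of a vertex in a (simple) graph on a finite vertex set. -/
def deg (H : SimpleGraph V) (x : V) : ℕ :=
  (Finset.univ.filter fun y => H.Adj x y).card

/-- `(D, P; H)` is a DP-Nash subgraph of the capacitated graph `(G, κ)`:
`H` is a spanning subgraph of `G`, bipartite with partite sets `D` and `P`,
no vertex of `P` is isolated in `H`, and every `x ∈ D` has
`H`-degree `min (d_G x) (κ x)`. -/
def IsDPNash (G : SimpleGraph V) (κ : V → ℕ) (D P : Finset V) (H : SimpleGraph V) : Prop :=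
  H ≤ G ∧ D ∪ P = Finset.univ ∧ Disjoint D P ∧
    (∀ ⦃u v⦄, H.Adj u v → (u ∈ D ∧ v ∈ P) ∨ (u ∈ P ∧ v ∈ D)) ∧
    (∀ v ∈ P, 0 < deg H v) ∧
    (∀ x ∈ D, deg H x = min (deg G x) (κ x))

/-- `X = {x : κ(x) = d_G(x)}`. -/
def XX (G : SimpleGraph V) (κ : V → ℕ) : Finset V :=
  Finset.univ.filter fun x => κ x = deg G x

/-- `Y = N(X) \ X`. -/
def YY (G : SimpleGraph V) (κ : V → ℕ) : Finset V :=
  Finset.univ.filter fun y => y ∉ XX G κ ∧ ∃ x ∈ XX G κ, G.Adj x y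

/-- `Z = V \ (X ∪ Y)`. -/
def ZZ (G : SimpleGraph V) (κ : V → ℕ) : Finset V :=
  Finset.univ \ (XX G κ ∪ YY G κ)

/-- `Y^{κ>0} = {y ∈ Y : κ(y) > 0}`. -/
def Ypos (G : SimpleGraph V) (κ : V → ℕ) : Finset V :=
  (YY G κ).filter fun y => 0 < κ y

/-- The neighbours of `x` in `G` lying in `W`. -/
def nbrW (G : SimpleGraph V) (x : V) (W : Finset V) : Finset V :=
  Finset.univ.filter fun y => G.Adj x y ∧ y ∈ W

/-- `L(W) = {x ∈ X ∪ Z : |N_G(x) ∩ W| > d_G(x) - κ(x)}`. -/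
def LL (G : SimpleGraph V) (κ : V → ℕ) (W : Finset V) : Finset V :=
  (XX G κ ∪ ZZ G κ).filter fun x => deg G x - κ x < (nbrW G x W).card


section Hall

variable {ι α : Type*} [DecidableEq ι]

theorem exists_injOn_copies_of_forall_sum_le_card [DecidableEq α] [Nonempty α] (I : Finset ι)
    (κ : ι → ℕ) (N : ι → Finset α) (h : ∀ S ⊆ I, ∑ i ∈ S, κ i ≤ #(S.biUnion N)) :
    ∃ f : ι × ℕ → α, Set.InjOn f {p | p.1 ∈ I ∧ p.2 < κ p.1} ∧
      ∀ p : ι × ℕ, p.1 ∈ I → p.2 < κ p.1 → f p ∈ N p.1 := by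
  have hall : ∀ s : Finset {p : ι × ℕ // p.1 ∈ I ∧ p.2 < κ p.1},
      #s ≤ #(s.biUnion fun p => N p.1.1) := by
    intro s
    have hfiber : ∀ i, #{p ∈ s | p.1.1 = i} ≤ κ i := fun i => by
      simpa using card_le_card_of_injOn (t := range (κ i)) (fun p => p.1.2)
        (fun p hp => by simpa [← (mem_filter.1 hp).2] using p.2.2)
        (fun p hp q hq hpq => Subtype.ext (Prod.ext
          ((mem_filter.1 hp).2.trans (mem_filter.1 hq).2.symm) hpq))
    calc #s = ∑ i ∈ s.image (·.1.1), #{p ∈ s | p.1.1 = i} := card_eq_sum_card_image _ _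
      _ ≤ ∑ i ∈ s.image (·.1.1), κ i := sum_le_sum fun i _ => hfiber i
      _ ≤ #((s.image (·.1.1)).biUnion N) :=
          h _ fun i hi => by obtain ⟨p, -, rfl⟩ := mem_image.1 hi; exact p.2.1
      _ = #(s.biUnion fun p => N p.1.1) := by rw [image_biUnion]
  obtain ⟨f, hf_inj, hf_mem⟩ := (all_card_le_biUnion_card_iff_exists_injective _).1 hall
  refine ⟨fun p => if hp : p.1 ∈ I ∧ p.2 < κ p.1 then f ⟨p, hp⟩ else Classical.arbitrary α,
    fun p hp q hq hpq => ?_, fun p h₁ h₂ => ?_⟩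
  · simp only [dif_pos (show p.1 ∈ I ∧ p.2 < κ p.1 from hp),
      dif_pos (show q.1 ∈ I ∧ q.2 < κ q.1 from hq)] at hpq
    exact congrArg Subtype.val (hf_inj hpq)
  · simpa only [dif_pos (And.intro h₁ h₂)] using hf_mem ⟨p, h₁, h₂⟩

theorem exists_capacitated_cover (C : Finset α) (S : Finset ι) (κ : ι → ℕ)
    (r : ι → α → Prop) [DecidableRel r]
    (h : ∀ A ⊆ C, #A ≤ ∑ y ∈ S with ∃ a ∈ A, r y a, κ y) :
    ∃ E : ι → Finset α, (∀ y, E y ⊆ {c ∈ C | r y c} ∧ #(E y) ≤ κ y) ∧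
      ∀ c ∈ C, ∃ y ∈ S, c ∈ E y := by
  let slots : C → Finset (Σ _ : ι, ℕ) := fun c =>
    {y ∈ S | r y c}.sigma fun y => range (κ y)
  have hall : ∀ s : Finset C, #s ≤ #(s.biUnion slots) := by
    intro s
    have hslots : s.biUnion slots =
        {y ∈ S | ∃ a ∈ s.map (Function.Embedding.subtype _), r y a}.sigma
          fun y => range (κ y) := by
      ext ⟨y, k⟩
      simp only [slots, mem_biUnion, mem_sigma, mem_filter, mem_map,
        Function.Embedding.coe_subtype]
      constructor
      · rintro ⟨c, hc, ⟨hy, hr⟩, hk⟩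
        exact ⟨⟨hy, c, ⟨c, hc, rfl⟩, hr⟩, hk⟩
      · rintro ⟨⟨hy, _, ⟨c, hc, rfl⟩, hr⟩, hk⟩
        exact ⟨c, hc, ⟨hy, hr⟩, hk⟩
    rw [hslots, card_sigma]
    simpa using h (s.map (Function.Embedding.subtype _)) fun a ha => by
      obtain ⟨c, -, rfl⟩ := mem_map.1 ha; exact c.2
  obtain ⟨f, hf_inj, hf_mem⟩ := (all_card_le_biUnion_card_iff_exists_injective _).1 hall
  have hf : ∀ c, (f c).1 ∈ S ∧ r (f c).1 c ∧ (f c).2 < κ (f c).1 := fun c => by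
    simpa [slots, and_assoc] using hf_mem c
  refine ⟨fun y => {c ∈ C.attach | (f c).1 = y}.map (Function.Embedding.subtype _),
    fun y => ⟨fun c hc => ?_, ?_⟩, fun c hc => ⟨(f ⟨c, hc⟩).1, (hf _).1, ?_⟩⟩
  · obtain ⟨c, hc', rfl⟩ := mem_map.1 hc
    rw [← (mem_filter.1 hc').2]
    exact mem_filter.2 ⟨c.2, (hf c).2.1⟩
  · rw [card_map]
    simpa using card_le_card_of_injOn (t := range (κ y)) (fun c => (f c).2)
      (fun c hc => by simpa [← (mem_filter.1 hc).2] using (hf c).2.2)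
      (fun c hc d hd hcd => hf_inj (Sigma.ext
        ((mem_filter.1 hc).2.trans (mem_filter.1 hd).2.symm) (heq_of_eq hcd)))
  · exact mem_map.2 ⟨⟨c, hc⟩, mem_filter.2 ⟨mem_attach _ _, rfl⟩, rfl⟩

end Hall

theorem SimpleGraph.exists_isIndepSet_forall_exists_adj {α : Type*} [DecidableEq α]
    (G : SimpleGraph α) (s : Finset α) :
    ∃ M ⊆ s, G.IsIndepSet (M : Set α) ∧ ∀ p ∈ s, p ∉ M → ∃ m ∈ M, G.Adj m p := by
  obtain ⟨M, hM, hmax⟩ :=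
    exists_max_image (s.powerset.filter fun M : Finset α => G.IsIndepSet (M : Set α)) card
      ⟨∅, by simp⟩
  simp only [mem_filter, mem_powerset] at hM hmax
  refine ⟨M, hM.1, hM.2, fun p hp hpM => ?_⟩
  by_contra! hfar
  have hins : G.IsIndepSet (insert p M : Set α) :=
    Set.pairwise_insert.2 ⟨hM.2, fun m hm _ => ⟨fun h => hfar m hm h.symm, hfar m hm⟩⟩
  have := hmax (insert p M) ⟨insert_subset hp hM.1, by rwa [coe_insert]⟩
  rw [card_insert_of_notMem hpM] at this
  omega

namespace CapacitatedGraph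

def nbhd (G : SimpleGraph V) (v : V) : Finset V := {w | G.Adj v w}

@[simp]
theorem mem_nbhd {G : SimpleGraph V} {v w : V} : w ∈ nbhd G v ↔ G.Adj v w := by
  simp [nbhd]

theorem deg_pos_of_adj {H : SimpleGraph V} {u v : V} (h : H.Adj v u) : 0 < deg H v :=
  card_pos.2 ⟨u, by simpa using h⟩

theorem isDPNash_fromRel {G : SimpleGraph V} {κ : V → ℕ} {D : Finset V} {R : V → V → Prop}
    (hR : ∀ u v, R u v → u ∈ D ∧ v ∉ D ∧ G.Adj u v)
    (hdeg : ∀ u ∈ D, #{v | R u v} = min (deg G u) (κ u))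
    (hcover : ∀ v ∉ D, ∃ u, R u v) :
    IsDPNash G κ D Dᶜ (SimpleGraph.fromRel R) := by
  have hadj : ∀ u v, (SimpleGraph.fromRel R).Adj u v ↔ R u v ∨ R v u := fun u v => by
    refine ⟨And.right, fun h => ⟨?_, h⟩⟩
    rintro rfl
    rcases h with h | h <;> exact (hR _ _ h).2.1 (hR _ _ h).1
  refine ⟨fun u v h => ?_, union_compl D, disjoint_compl_right, fun u v h => ?_,
    fun v hv => ?_, fun u hu => ?_⟩
  · rcases (hadj u v).1 h with h | h
    exacts [(hR _ _ h).2.2, (hR _ _ h).2.2.symm]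
  · rcases (hadj u v).1 h with h | h
    · exact Or.inl ⟨(hR _ _ h).1, mem_compl.2 (hR _ _ h).2.1⟩
    · exact Or.inr ⟨mem_compl.2 (hR _ _ h).2.1, (hR _ _ h).1⟩
  · obtain ⟨u, hu⟩ := hcover v (mem_compl.1 hv)
    exact deg_pos_of_adj ((hadj v u).2 (Or.inr hu))
  · rw [← hdeg u hu, deg]
    congr 1
    ext v
    simp only [mem_filter, mem_univ, true_and, hadj, or_iff_left_iff_imp]
    exact fun h => absurd hu (hR _ _ h).2.1

variable (G : SimpleGraph V) (κ : V → ℕ)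

theorem card_add_card_le_sum_of_forall_exists_adj {D M : Finset V}
    (hdom : ∀ d ∈ D, ∃ m ∈ M, G.Adj m d) (hcap : ∀ m ∈ M, #(nbhd G m ∩ D) < κ m) :
    #D + #M ≤ ∑ m ∈ M, κ m := by
  have hcover : D ⊆ M.biUnion fun m => nbhd G m ∩ D := fun d hd => by
    obtain ⟨m, hm, hmd⟩ := hdom d hd
    exact mem_biUnion.2 ⟨m, hm, mem_inter.2 ⟨mem_nbhd.2 hmd, hd⟩⟩
  calc #D + #M ≤ ∑ m ∈ M, #(nbhd G m ∩ D) + ∑ m ∈ M, 1 := by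
        rw [sum_const, smul_eq_mul, mul_one]
        exact Nat.add_le_add_right ((card_le_card hcover).trans card_biUnion_le) _
    _ = ∑ m ∈ M, (#(nbhd G m ∩ D) + 1) := sum_add_distrib.symm
    _ ≤ ∑ m ∈ M, κ m := sum_le_sum hcap

theorem notMem_XX_of_mem_YY {y : V} (hy : y ∈ YY G κ) : y ∉ XX G κ :=
  (mem_filter.1 hy).2.1

theorem mem_XX_or_mem_YY (hZ : ZZ G κ = ∅) (v : V) : v ∈ XX G κ ∨ v ∈ YY G κ := by
  by_contra h
  have hv : v ∈ ZZ G κ := by simpa [ZZ] using h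
  simp [hZ] at hv

theorem exists_isDPNash_XX (hZ : ZZ G κ = ∅)
    (hind : ∀ u ∈ XX G κ, ∀ v ∈ XX G κ, ¬ G.Adj u v) :
    ∃ H, IsDPNash G κ (XX G κ) (XX G κ)ᶜ H := by
  refine ⟨_, isDPNash_fromRel (R := fun u v => u ∈ XX G κ ∧ G.Adj u v)
    (fun u v ⟨hu, huv⟩ => ⟨hu, fun hv => hind u hu v hv huv, huv⟩) (fun u hu => ?_)
    (fun v hv => ?_)⟩
  · rw [(mem_filter.1 hu).2, min_self, deg]
    simp [hu]
  · obtain ⟨-, -, u, hu, huv⟩ := mem_filter.1 ((mem_XX_or_mem_YY G κ hZ v).resolve_left hv)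
    exact ⟨u, hu, huv⟩

def nbrX (S : Finset V) : Finset V := {t ∈ XX G κ | ∃ y ∈ S, G.Adj y t}

def excess (S : Finset V) : ℤ := ∑ y ∈ S, (κ y : ℤ) - #(nbrX G κ S)

def Admissible (S : Finset V) : Prop := S ⊆ YY G κ ∧ ∀ y ∈ S, κ y ≤ #(nbhd G y \ S)

-- lexicographic in `(excess, card)`, as `#S ≤ card V`
def potential (S : Finset V) : ℤ := excess G κ S * (Fintype.card V + 1) + #S

def IsOptimal (S : Finset V) : Prop :=
  Admissible G κ S ∧ ∀ R, Admissible G κ R → potential G κ R ≤ potential G κ S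

def stranded (S : Finset V) : Finset V :=
  {p ∈ YY G κ \ S | ∀ t ∈ XX G κ, G.Adj p t → t ∈ nbrX G κ S}

def targets (S : Finset V) : Finset V := nbrX G κ S ∪ stranded G κ S

def supporters (S A : Finset V) : Finset V := {y ∈ S | ∃ a ∈ A, G.Adj y a}

variable {G κ}

theorem mem_nbrX {S : Finset V} {t : V} :
    t ∈ nbrX G κ S ↔ t ∈ XX G κ ∧ ∃ y ∈ S, G.Adj y t :=
  mem_filter

theorem nbrX_subset_XX (S : Finset V) : nbrX G κ S ⊆ XX G κ := filter_subset _ _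

theorem nbrX_mono {S T : Finset V} (h : S ⊆ T) : nbrX G κ S ⊆ nbrX G κ T :=
  fun _ ht => mem_nbrX.2 <| (mem_nbrX.1 ht).imp_right fun ⟨y, hy, hyt⟩ => ⟨y, h hy, hyt⟩

theorem nbrX_singleton_subset {S : Finset V} (hS : S ⊆ YY G κ) (y : V) :
    nbrX G κ {y} ⊆ nbhd G y \ S := fun t ht => by
  obtain ⟨-, y', hy', hyt⟩ := mem_nbrX.1 ht
  rw [mem_singleton.1 hy'] at hyt
  exact mem_sdiff.2
    ⟨mem_nbhd.2 hyt, fun htS => notMem_XX_of_mem_YY G κ (hS htS) (mem_nbrX.1 ht).1⟩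

theorem excess_nonneg_iff {S : Finset V} :
    0 ≤ excess G κ S ↔ #(nbrX G κ S) ≤ ∑ y ∈ S, κ y := by
  rw [excess, ← Nat.cast_sum]
  omega

theorem potential_lt_of_excess_lt {S R : Finset V} (h : excess G κ S < excess G κ R) :
    potential G κ S < potential G κ R := by
  have hS : (#S : ℤ) ≤ Fintype.card V := by exact_mod_cast card_le_univ S
  unfold potential
  nlinarith

theorem potential_lt_of_card_lt {S R : Finset V} (h : excess G κ S ≤ excess G κ R)
    (hcard : #S < #R) : potential G κ S < potential G κ R := by
  unfold potential
  have : (#S : ℤ) < #R := by exact_mod_cast hcard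
  nlinarith

theorem mem_stranded {S : Finset V} {p : V} :
    p ∈ stranded G κ S ↔
      (p ∈ YY G κ ∧ p ∉ S) ∧ ∀ t ∈ XX G κ, G.Adj p t → t ∈ nbrX G κ S := by
  rw [stranded, mem_filter, mem_sdiff]

theorem nbrX_subset_of_subset_stranded {S M : Finset V} (hM : M ⊆ stranded G κ S) :
    nbrX G κ M ⊆ nbrX G κ S := fun t ht => by
  obtain ⟨htX, m, hm, hmt⟩ := mem_nbrX.1 ht
  exact (mem_stranded.1 (hM hm)).2 t htX hmt

theorem nbrX_insert_of_mem_stranded {S : Finset V} {q : V} (hq : q ∈ stranded G κ S) :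
    nbrX G κ (insert q S) = nbrX G κ S := by
  refine Subset.antisymm (fun t ht => ?_) (nbrX_mono (subset_insert q S))
  obtain ⟨htX, y, hy, hyt⟩ := mem_nbrX.1 ht
  rcases mem_insert.1 hy with rfl | hy
  · exact (mem_stranded.1 hq).2 t htX hyt
  · exact mem_nbrX.2 ⟨htX, y, hy, hyt⟩

theorem notMem_of_mem_targets {S : Finset V} (hS : S ⊆ YY G κ) {c : V}
    (hc : c ∈ targets G κ S) : c ∉ S := by
  rcases mem_union.1 hc with hc | hc
  · exact fun hcS => notMem_XX_of_mem_YY G κ (hS hcS) (mem_nbrX.1 hc).1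
  · exact (mem_stranded.1 hc).1.2

variable (G κ)

theorem exists_excess_nonneg_of_not_matching (x : V)
    (hnomatch : ¬ ∃ f : V × ℕ → V,
      Set.InjOn f {p : V × ℕ | p.1 ∈ YY G κ ∧ p.2 < κ p.1} ∧
      ∀ p : V × ℕ, p.1 ∈ YY G κ → p.2 < κ p.1 →
        f p ∈ XX G κ ∧ f p ≠ x ∧ G.Adj p.1 (f p)) :
    ∃ S, S.Nonempty ∧ S ⊆ YY G κ ∧ 0 ≤ excess G κ S := by
  by_contra! hdeficient
  have : Nonempty V := ⟨x⟩
  let N : V → Finset V := fun y => {t ∈ XX G κ | G.Adj y t}.erase x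
  have hall : ∀ S ⊆ YY G κ, ∑ y ∈ S, κ y ≤ #(S.biUnion N) := by
    intro S hS
    rcases S.eq_empty_or_nonempty with rfl | hne
    · simp
    have hunion : S.biUnion N = (nbrX G κ S).erase x := by
      ext t
      simp only [N, mem_biUnion, mem_erase, mem_filter, mem_nbrX]
      tauto
    have hlt := hdeficient S hne hS
    rw [← not_le, excess_nonneg_iff] at hlt
    rw [hunion]
    have := pred_card_le_card_erase (s := nbrX G κ S) (a := x)
    omega
  obtain ⟨f, hf_inj, hf⟩ := exists_injOn_copies_of_forall_sum_le_card (YY G κ) κ N hall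
  exact hnomatch
    ⟨f, hf_inj, fun p h₁ h₂ => by simpa [N, and_comm, and_left_comm] using hf p h₁ h₂⟩

theorem exists_admissible_of_excess_nonneg (hκ : ∀ v, κ v ≤ deg G v)
    (h : ∃ S, S.Nonempty ∧ S ⊆ YY G κ ∧ 0 ≤ excess G κ S) :
    ∃ S, S.Nonempty ∧ Admissible G κ S ∧ 0 ≤ excess G κ S := by
  obtain ⟨S, hS, hmin⟩ := exists_min_image
    {S ∈ univ.powerset | S.Nonempty ∧ S ⊆ YY G κ ∧ 0 ≤ excess G κ S} card
    (by obtain ⟨S, hS⟩ := h; exact ⟨S, by simpa using hS⟩)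
  simp only [mem_filter, mem_powerset, subset_univ, true_and] at hS hmin
  obtain ⟨hne, hY, hex⟩ := hS
  refine ⟨S, hne, ⟨hY, fun y hy => ?_⟩, hex⟩
  by_cases hSy : S = {y}
  · subst hSy
    rw [sdiff_singleton_eq_erase, erase_eq_of_notMem (by simp)]
    exact hκ y
  · -- a proper subset `{y}` is no violator, so `y` has more than `κ y` neighbours in `X`
    have hsmall : #{y} < #S :=
      card_lt_card (ssubset_of_subset_of_ne (singleton_subset_iff.2 hy) (Ne.symm hSy))
    have hneg : ¬ 0 ≤ excess G κ {y} := fun h' =>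
      (hmin {y} ⟨singleton_nonempty y, singleton_subset_iff.2 (hY hy), h'⟩).not_gt hsmall
    rw [excess_nonneg_iff, sum_singleton, not_le] at hneg
    exact hneg.le.trans (card_le_card (nbrX_singleton_subset hY y))

theorem exists_isOptimal (h : ∃ S, S.Nonempty ∧ Admissible G κ S ∧ 0 ≤ excess G κ S) :
    ∃ S, S.Nonempty ∧ IsOptimal G κ S := by
  obtain ⟨S, hS, hmax⟩ := exists_max_image {S ∈ univ.powerset | Admissible G κ S}
    (potential G κ) ⟨∅, by simp [Admissible]⟩
  simp only [mem_filter, mem_powerset, subset_univ, true_and] at hS hmax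
  refine ⟨S, nonempty_iff_ne_empty.2 ?_, hS, hmax⟩
  rintro rfl
  obtain ⟨S₀, hne, hadm, hex⟩ := h
  have hpos : 0 < potential G κ S₀ := by
    unfold potential
    have : (0 : ℤ) < #S₀ := by exact_mod_cast hne.card_pos
    have : 0 ≤ excess G κ S₀ * (Fintype.card V + 1) := mul_nonneg hex (by positivity)
    linarith
  have hzero : potential G κ ∅ = 0 := by simp [potential, excess, nbrX]
  linarith [hmax S₀ hadm]

variable {G κ}

theorem IsOptimal.excess_le {S R : Finset V} (hS : IsOptimal G κ S) (hR : Admissible G κ R) :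
    excess G κ R ≤ excess G κ S :=
  not_lt.1 fun h => (hS.2 R hR).not_gt (potential_lt_of_excess_lt h)

theorem IsOptimal.exists_tight_of_mem_stranded {S : Finset V} (hS : IsOptimal G κ S) {q : V}
    (hq : q ∈ stranded G κ S) (hcap : κ q ≤ #(nbhd G q \ S)) :
    ∃ w ∈ S, q ∈ nbhd G w \ S ∧ κ w = #(nbhd G w \ S) := by
  obtain ⟨⟨hqY, hqS⟩, -⟩ := mem_stranded.1 hq
  -- `insert q S` has at least the excess of `S` and more elements, so it is not admissible
  have hnot : ¬ Admissible G κ (insert q S) := fun hadm => by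
    refine (hS.2 _ hadm).not_gt (potential_lt_of_card_lt ?_ ?_)
    · rw [excess, excess, sum_insert hqS, nbrX_insert_of_mem_stranded hq]
      omega
    · rw [card_insert_of_notMem hqS]
      omega
  simp only [Admissible, insert_subset_iff, hqY, hS.1.1, true_and, not_forall, not_le] at hnot
  obtain ⟨w, hw, hlt⟩ := hnot
  rcases mem_insert.1 hw with rfl | hwS
  · rw [sdiff_insert_of_notMem (by simp)] at hlt
    omega
  · have hle := hS.1.2 w hwS
    rw [sdiff_insert] at hlt
    have hqw : q ∈ nbhd G w \ S := by
      by_contra h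
      rw [erase_eq_of_notMem h] at hlt
      omega
    have := card_erase_of_mem hqw
    exact ⟨w, hwS, hqw, by omega⟩

theorem card_le_sum_supporters_of_tight {S A : Finset V} {w : V} (hAS : ∀ a ∈ A, a ∉ S)
    (hw : w ∈ S) (htight : κ w = #(nbhd G w \ S)) (hwA : ∃ a ∈ A, G.Adj w a)
    (hrest : #(A \ nbhd G w) ≤ ∑ y ∈ supporters G S (A \ nbhd G w), κ y) :
    #A ≤ ∑ y ∈ supporters G S A, κ y := by
  have hwB : w ∈ supporters G S A := mem_filter.2 ⟨hw, hwA⟩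
  have hsupp : supporters G S (A \ nbhd G w) ⊆ (supporters G S A).erase w := fun y hy => by
    obtain ⟨hyS, a, ha, hya⟩ := mem_filter.1 hy
    obtain ⟨haA, haw⟩ := mem_sdiff.1 ha
    exact mem_erase.2
      ⟨by rintro rfl; exact haw (mem_nbhd.2 hya), mem_filter.2 ⟨hyS, a, haA, hya⟩⟩
  have hnear : #(A ∩ nbhd G w) ≤ κ w := htight ▸ card_le_card fun a ha =>
    mem_sdiff.2 ⟨(mem_inter.1 ha).2, hAS a (mem_inter.1 ha).1⟩
  calc #A = #(A \ nbhd G w) + #(A ∩ nbhd G w) := (card_sdiff_add_card_inter _ _).symm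
    _ ≤ ∑ y ∈ (supporters G S A).erase w, κ y + κ w :=
        Nat.add_le_add (hrest.trans (sum_le_sum_of_subset hsupp)) hnear
    _ = ∑ y ∈ supporters G S A, κ y := sum_erase_add _ _ hwB

theorem admissible_swap (hκ : ∀ v, κ v ≤ deg G v) {S A M : Finset V} (hS : Admissible G κ S)
    (hM : M ⊆ A ∩ stranded G κ S) (hMind : G.IsIndepSet (M : Set V)) :
    Admissible G κ (S \ supporters G S A ∪ M) := by
  have hMA : ∀ m ∈ M, m ∈ A := fun m hm => (mem_inter.1 (hM hm)).1
  refine ⟨union_subset (sdiff_subset.trans hS.1)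
    fun m hm => (mem_stranded.1 (mem_inter.1 (hM hm)).2).1.1, fun y hy => ?_⟩
  rcases mem_union.1 hy with hy | hy
  · obtain ⟨hyS, hyB⟩ := mem_sdiff.1 hy
    refine (hS.2 y hyS).trans (card_le_card fun v hv => ?_)
    obtain ⟨hvN, hvS⟩ := mem_sdiff.1 hv
    refine mem_sdiff.2 ⟨hvN, fun hv' => ?_⟩
    rcases mem_union.1 hv' with h | h
    · exact hvS (mem_sdiff.1 h).1
    · exact hyB (mem_filter.2 ⟨hyS, v, hMA v h, mem_nbhd.1 hvN⟩)
  · rw [sdiff_eq_self_of_disjoint (disjoint_left.2 fun v hvN hv' => ?_)]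
    · exact hκ y
    rcases mem_union.1 hv' with h | h
    · exact (mem_sdiff.1 h).2
        (mem_filter.2 ⟨(mem_sdiff.1 h).1, y, hMA y hy, (mem_nbhd.1 hvN).symm⟩)
    · exact hMind hy h (G.ne_of_adj (mem_nbhd.1 hvN)) (mem_nbhd.1 hvN)

theorem nbrX_swap_subset {S A M : Finset V} (hM : M ⊆ stranded G κ S) :
    nbrX G κ (S \ supporters G S A ∪ M) ⊆ (nbrX G κ S \ A) ∪ (A ∩ nbrX G κ M) := by
  intro t ht
  obtain ⟨htX, y, hy, hyt⟩ := mem_nbrX.1 ht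
  rcases mem_union.1 hy with hy | hy
  · obtain ⟨hyS, hyB⟩ := mem_sdiff.1 hy
    refine mem_union_left _ (mem_sdiff.2 ⟨mem_nbrX.2 ⟨htX, y, hyS, hyt⟩, fun htA => ?_⟩)
    exact hyB (mem_filter.2 ⟨hyS, t, htA, hyt⟩)
  · have htM : t ∈ nbrX G κ M := mem_nbrX.2 ⟨htX, y, hy, hyt⟩
    by_cases htA : t ∈ A
    · exact mem_union_right _ (mem_inter.2 ⟨htA, htM⟩)
    · exact mem_union_left _ (mem_sdiff.2 ⟨nbrX_subset_of_subset_stranded hM htM, htA⟩)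

theorem card_nbrX_swap_add_le {S A M : Finset V} (hM : M ⊆ stranded G κ S) :
    #(nbrX G κ (S \ supporters G S A ∪ M)) + #(A ∩ nbrX G κ S) ≤
      #(nbrX G κ S) + #(A ∩ nbrX G κ M) := by
  have h₁ := card_le_card (nbrX_swap_subset (A := A) hM)
  have h₂ := card_union_le (nbrX G κ S \ A) (A ∩ nbrX G κ M)
  have h₃ : #(nbrX G κ S \ A) = #(nbrX G κ S) - #(A ∩ nbrX G κ S) := card_sdiff
  have h₄ : #(A ∩ nbrX G κ S) ≤ #(nbrX G κ S) := card_le_card inter_subset_right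
  omega

theorem excess_add_card_le_excess_swap {S A M : Finset V} (hS : S ⊆ YY G κ)
    (hA : A ⊆ targets G κ S) (hM : M ⊆ A ∩ stranded G κ S)
    (hdom : ∀ q ∈ A ∩ stranded G κ S, q ∉ M → ∃ m ∈ M, G.Adj m q)
    (hcap : ∀ m ∈ M, #(nbhd G m \ S) < κ m) :
    excess G κ S + #A - ∑ y ∈ supporters G S A, κ y ≤
      excess G κ (S \ supporters G S A ∪ M) := by
  set B := supporters G S A
  set AT := A ∩ nbrX G κ S
  set AQ := A ∩ stranded G κ S
  set K := A ∩ nbrX G κ M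
  have hdisjXY : ∀ {P Q : Finset V}, P ⊆ XX G κ → Q ⊆ YY G κ → Disjoint P Q := fun hP hQ =>
    disjoint_left.2 fun v hvP hvQ => notMem_XX_of_mem_YY G κ (hQ hvQ) (hP hvP)
  have hAQY : AQ ⊆ YY G κ := fun q hq => (mem_stranded.1 (mem_inter.1 hq).2).1.1
  have hsplit : #A = #AT + #AQ := by
    have hdisj : Disjoint AT AQ := hdisjXY (inter_subset_right.trans (nbrX_subset_XX S)) hAQY
    have hunion : AT ∪ AQ = A := (inter_union_distrib_left _ _ _).symm.trans (inter_eq_left.2 hA)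
    rw [← card_union_of_disjoint hdisj, hunion]
  have hcount : #AQ + #K ≤ ∑ m ∈ M, κ m := by
    have hDA : AQ \ M ∪ K ⊆ A :=
      union_subset (sdiff_subset.trans inter_subset_left) inter_subset_left
    have hD := card_add_card_le_sum_of_forall_exists_adj G κ (D := AQ \ M ∪ K) (M := M)
      (fun d hd => (mem_union.1 hd).elim (fun hd => hdom d (mem_sdiff.1 hd).1 (mem_sdiff.1 hd).2)
        fun hd => (mem_nbrX.1 (mem_inter.1 hd).2).2)
      fun m hm => (card_le_card fun d hd => mem_sdiff.2 ⟨(mem_inter.1 hd).1,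
        notMem_of_mem_targets hS (hA (hDA (mem_inter.1 hd).2))⟩).trans_lt (hcap m hm)
    have hdisj : Disjoint (AQ \ M) K :=
      (hdisjXY (inter_subset_right.trans (nbrX_subset_XX M)) (sdiff_subset.trans hAQY)).symm
    rw [card_union_of_disjoint hdisj, card_sdiff_of_subset hM] at hD
    have := card_le_card hM
    omega
  have hnbrX : #(nbrX G κ (S \ B ∪ M)) + #AT ≤ #(nbrX G κ S) + #K :=
    card_nbrX_swap_add_le (hM.trans inter_subset_right)
  have hsum₁ : ∑ y ∈ S \ B ∪ M, κ y = ∑ y ∈ S \ B, κ y + ∑ y ∈ M, κ y :=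
    sum_union (disjoint_right.2 fun m hm h =>
      (mem_stranded.1 (mem_inter.1 (hM hm)).2).1.2 (mem_sdiff.1 h).1)
  have hsum₂ : ∑ y ∈ S \ B, κ y + ∑ y ∈ B, κ y = ∑ y ∈ S, κ y :=
    sum_sdiff (filter_subset _ _)
  simp only [excess, ← Nat.cast_sum]
  omega

theorem IsOptimal.card_le_sum_supporters (hκ : ∀ v, κ v ≤ deg G v) {S : Finset V}
    (hS : IsOptimal G κ S) :
    ∀ A ⊆ targets G κ S, #A ≤ ∑ y ∈ supporters G S A, κ y := by
  intro A
  induction A using Finset.strongInduction with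
  | H A ih =>
  intro hA
  by_cases hroom : ∃ q ∈ A ∩ stranded G κ S, κ q ≤ #(nbhd G q \ S)
  · obtain ⟨q, hq, hcap⟩ := hroom
    obtain ⟨hqA, hqQ⟩ := mem_inter.1 hq
    obtain ⟨w, hwS, hqw, htight⟩ := hS.exists_tight_of_mem_stranded hqQ hcap
    have hqw' : q ∈ nbhd G w := (mem_sdiff.1 hqw).1
    refine card_le_sum_supporters_of_tight
      (fun a ha => notMem_of_mem_targets hS.1.1 (hA ha)) hwS htight ⟨q, hqA, mem_nbhd.1 hqw'⟩
      (ih _ ((ssubset_iff_of_subset sdiff_subset).2 ⟨q, hqA, fun h => (mem_sdiff.1 h).2 hqw'⟩)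
        (sdiff_subset.trans hA))
  · simp only [not_exists, not_and, not_le] at hroom
    obtain ⟨M, hMsub, hMind, hMdom⟩ :=
      G.exists_isIndepSet_forall_exists_adj (A ∩ stranded G κ S)
    have hswap := excess_add_card_le_excess_swap hS.1.1 hA hMsub hMdom
      fun m hm => hroom m (hMsub hm)
    have hle := hS.excess_le (admissible_swap hκ hS.1 hMsub hMind)
    omega

theorem exists_isDPNash_of_forall_card_le_sum (hκ : ∀ v, κ v ≤ deg G v) (hZ : ZZ G κ = ∅)
    (hind : ∀ u ∈ XX G κ, ∀ v ∈ XX G κ, ¬ G.Adj u v) {S : Finset V}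
    (hS : Admissible G κ S)
    (hall : ∀ A ⊆ targets G κ S, #A ≤ ∑ y ∈ supporters G S A, κ y) :
    ∃ H, IsDPNash G κ (XX G κ \ nbrX G κ S ∪ S) (XX G κ \ nbrX G κ S ∪ S)ᶜ H := by
  obtain ⟨E, hE, hcovered⟩ := exists_capacitated_cover (targets G κ S) S κ G.Adj hall
  have hF : ∀ y ∈ S, ∃ F, E y ⊆ F ∧ F ⊆ nbhd G y \ S ∧ #F = κ y := fun y hy =>
    exists_subsuperset_card_eq (fun c hc => by
      obtain ⟨hcC, hyc⟩ := mem_filter.1 ((hE y).1 hc)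
      exact mem_sdiff.2 ⟨mem_nbhd.2 hyc, notMem_of_mem_targets hS.1 hcC⟩)
      (hE y).2 (hS.2 y hy)
  choose! F hEF hFN hFcard using hF
  have hXS : ∀ u ∈ XX G κ, u ∉ S := fun u hu huS => notMem_XX_of_mem_YY G κ (hS.1 huS) hu
  have hnbrX : ∀ {u v}, u ∈ S → v ∈ XX G κ → G.Adj u v → v ∈ nbrX G κ S :=
    fun hu hv huv => mem_nbrX.2 ⟨hv, _, hu, huv⟩
  refine ⟨_, isDPNash_fromRel
    (R := fun u v => (u ∈ XX G κ \ nbrX G κ S ∧ G.Adj u v) ∨ (u ∈ S ∧ v ∈ F u))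
    ?_ ?_ ?_⟩
  · rintro u v (⟨hu, huv⟩ | ⟨hu, hv⟩)
    · refine ⟨mem_union_left _ hu, fun hv => ?_, huv⟩
      rcases mem_union.1 hv with hv | hv
      · exact hind u (mem_sdiff.1 hu).1 v (mem_sdiff.1 hv).1 huv
      · exact (mem_sdiff.1 hu).2 (hnbrX hv (mem_sdiff.1 hu).1 huv.symm)
    · obtain ⟨hvN, hvS⟩ := mem_sdiff.1 (hFN u hu hv)
      refine ⟨mem_union_right _ hu, fun hv' => ?_, mem_nbhd.1 hvN⟩
      rcases mem_union.1 hv' with hv' | hv'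
      · exact (mem_sdiff.1 hv').2 (hnbrX hu (mem_sdiff.1 hv').1 (mem_nbhd.1 hvN))
      · exact hvS hv'
  · intro u hu
    rw [min_eq_right (hκ u)]
    rcases mem_union.1 hu with hu | hu
    · have huS := hXS u (mem_sdiff.1 hu).1
      rw [(mem_filter.1 (mem_sdiff.1 hu).1).2, deg]
      simp [hu, huS]
    · have huX : u ∉ XX G κ := fun h => hXS u h hu
      rw [← hFcard u hu]
      congr 1
      ext v
      simp [hu, huX]
  · intro v hv
    simp only [mem_union, mem_sdiff, not_or, not_and, not_not] at hv
    by_cases hvC : v ∈ targets G κ S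
    · obtain ⟨y, hy, hvE⟩ := hcovered v hvC
      exact ⟨y, Or.inr ⟨hy, hEF y hy hvE⟩⟩
    · -- `v ∈ Y \ S` is not stranded, so it has a neighbour in `X \ N_X(S)`
      have hvY : v ∈ YY G κ := (mem_XX_or_mem_YY G κ hZ v).resolve_left fun hvX =>
        hvC (mem_union_left _ (hv.1 hvX))
      have hvQ : v ∉ stranded G κ S := fun h => hvC (mem_union_right _ h)
      simp only [mem_stranded, hvY, hv.2, not_false_eq_true, and_true, true_and,
        not_forall] at hvQ
      obtain ⟨t, htX, hvt, htT⟩ := hvQ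
      exact ⟨t, Or.inl ⟨mem_sdiff.2 ⟨htX, htT⟩, hvt.symm⟩⟩

end CapacitatedGraph

theorem stmt13_general (G : SimpleGraph V) (κ : V → ℕ) (hκ : ∀ v, κ v ≤ deg G v)
    (hZ : ZZ G κ = ∅)
    (hind : ∀ u ∈ XX G κ, ∀ v ∈ XX G κ, ¬ G.Adj u v)
    (x : V)
    (hnomatch : ¬ ∃ f : V × ℕ → V,
      Set.InjOn f {p : V × ℕ | p.1 ∈ YY G κ ∧ p.2 < κ p.1} ∧
      ∀ p : V × ℕ, p.1 ∈ YY G κ → p.2 < κ p.1 →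
        f p ∈ XX G κ ∧ f p ≠ x ∧ G.Adj p.1 (f p)) :
    ∃ (D₁ P₁ : Finset V) (H₁ : SimpleGraph V) (D₂ P₂ : Finset V) (H₂ : SimpleGraph V),
      IsDPNash G κ D₁ P₁ H₁ ∧ IsDPNash G κ D₂ P₂ H₂ ∧ D₁ ≠ D₂ := by
  open CapacitatedGraph in
  obtain ⟨H₁, hH₁⟩ := exists_isDPNash_XX G κ hZ hind
  obtain ⟨S, ⟨y, hy⟩, hS⟩ := exists_isOptimal G κ <|
    exists_admissible_of_excess_nonneg G κ hκ <|
      exists_excess_nonneg_of_not_matching G κ x hnomatch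
  obtain ⟨H₂, hH₂⟩ :=
    exists_isDPNash_of_forall_card_le_sum hκ hZ hind hS.1 (hS.card_le_sum_supporters hκ)
  refine ⟨_, _, H₁, _, _, H₂, hH₁, hH₂, fun h => ?_⟩
  have hyD : y ∈ XX G κ \ nbrX G κ S ∪ S := mem_union_right _ hy
  exact notMem_XX_of_mem_YY G κ (hS.1.1 hy) (h ▸ hyD)

/-- If `Z = ∅`, `X` is independent and for some `x ∈ X` there is no matching
in `G^aux - x` saturating `Y^κ`, then there are two DP-Nash subgraphs with
distinct `D`-sets. -/
theorem stmt13 (G : SimpleGraph V) (κ : V → ℕ) (hκ : ∀ v, κ v ≤ deg G v)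
    (hedge : ∀ u v, G.Adj u v → 0 < κ u ∨ 0 < κ v)
    (hZ : ZZ G κ = ∅)
    (hind : ∀ u ∈ XX G κ, ∀ v ∈ XX G κ, ¬ G.Adj u v)
    (x : V) (hx : x ∈ XX G κ)
    (hnomatch : ¬ ∃ f : V × ℕ → V,
      Set.InjOn f {p : V × ℕ | p.1 ∈ YY G κ ∧ p.2 < κ p.1} ∧
      ∀ p : V × ℕ, p.1 ∈ YY G κ → p.2 < κ p.1 →
        f p ∈ XX G κ ∧ f p ≠ x ∧ G.Adj p.1 (f p)) :
    ∃ (D₁ P₁ : Finset V) (H₁ : SimpleGraph V) (D₂ P₂ : Finset V) (H₂ : SimpleGraph V),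
      IsDPNash G κ D₁ P₁ H₁ ∧ IsDPNash G κ D₂ P₂ H₂ ∧ D₁ ≠ D₂ :=
  stmt13_general G κ hκ hZ hind x hnomatch
end
end

section
/- Let (G,κ) be a capacitated graph with κ(x) = 1 ≤ d_G(x) for all x ∈ V(G). Let X = {x : d_G(x) = 1}, Y = N(X), Z = V(G) \ (X ∪ Y). Then all DP-Nash subgraphs of (G,κ) have the same D-set if and only if X ∪ Z is independent in G and |N_G(y) ∩ X| ≥ 2 for every y ∈ Y. -/
/-!
With `κ ≡ 1` a DP-Nash subgraph is a spanning star forest whose leaves form `D`, and every graph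
without isolated vertices has one: split off a star and recurse on the rest, which again has no
isolated vertices once the vertices stranded by the star are added to it as leaves. If two
vertices of `X ∪ Z` are adjacent, or some `y ∈ Y` has a single neighbour `x ∈ X`, such a star
can be built on that edge with either endpoint as its centre, which gives two different
`D`-sets. Conversely, under the two conditions every `y ∈ Y` keeps the edges to its (at least
two) pendant neighbours in any DP-Nash subgraph, so `Y ⊆ P`, and independence of `X ∪ Z` then
forces `D = X ∪ Z`.
-/

open Finset
open scoped Classical

noncomputable section

variable {V : Type*} [Fintype V]

/-- The set of vertices of degree `1` (for the capacity function `κ ≡ 1`). -/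
def X1 (G : SimpleGraph V) : Finset V := Finset.univ.filter fun x => deg G x = 1

/-- `Y = N(X)` for the case `κ ≡ 1`. -/
def Y1 (G : SimpleGraph V) : Finset V :=
  Finset.univ.filter fun y => ∃ x ∈ X1 G, G.Adj x y

/-- `Z = V \ (X ∪ Y)` for the case `κ ≡ 1`. -/
def Z1 (G : SimpleGraph V) : Finset V := Finset.univ \ (X1 G ∪ Y1 G)

set_option linter.unusedSectionVars false

section Degree

variable {H : SimpleGraph V} {x y z : V}

lemma deg_pos_iff : 0 < deg H x ↔ ∃ y, H.Adj x y := by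
  simp [deg, Finset.card_pos, Finset.filter_nonempty_iff]

lemma eq_of_deg_eq_one (h : deg H x = 1) (hy : H.Adj x y) (hz : H.Adj x z) : y = z :=
  Finset.card_le_one.mp h.le y (by simpa using hy) z (by simpa using hz)

lemma deg_eq_one_of_forall_adj_eq (hy : H.Adj x y) (h : ∀ z, H.Adj x z → z = y) :
    deg H x = 1 := by
  rw [deg, Finset.card_eq_one]
  exact ⟨y, Finset.ext fun z => by simpa using ⟨h z, fun hz => hz ▸ hy⟩⟩

end Degree

/-- The vertices that become isolated when `S` is deleted from `G[W]`. -/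
def strandedBy (G : SimpleGraph V) (W S : Finset V) : Finset V :=
  W.filter fun a => a ∉ S ∧ ∀ b ∈ W, G.Adj a b → b ∈ S

lemma mem_strandedBy {G : SimpleGraph V} {W S : Finset V} {a : V} :
    a ∈ strandedBy G W S ↔ a ∈ W ∧ a ∉ S ∧ ∀ b ∈ W, G.Adj a b → b ∈ S := by
  simp [strandedBy]

lemma exists_adj_sdiff_union_strandedBy (G : SimpleGraph V) {W S : Finset V} {a : V}
    (ha : a ∈ W \ (S ∪ strandedBy G W S)) :
    ∃ b ∈ W \ (S ∪ strandedBy G W S), G.Adj a b := by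
  simp only [Finset.mem_sdiff, Finset.mem_union, mem_strandedBy, not_or, not_and,
    not_forall] at ha ⊢
  obtain ⟨b, hbW, hab, hbS⟩ := ha.2.2 ha.1 ha.2.1
  exact ⟨b, ⟨hbW, hbS, fun _ _ => ⟨a, ha.1, hab.symm, ha.2.1⟩⟩, hab⟩

/-- A spanning star forest of `G[W]` with leaf set `D`, the leaf `d` hanging from the
centre `f d`. -/
structure IsStarForest (G : SimpleGraph V) (W D : Finset V) (f : V → V) : Prop where
  subset : D ⊆ W
  mapsTo : ∀ d ∈ D, f d ∈ W \ D
  adj : ∀ d ∈ D, G.Adj d (f d)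
  surj : ∀ p ∈ W \ D, ∃ d ∈ D, f d = p

lemma IsStarForest.addStar {G : SimpleGraph V} {W L D : Finset V} {c : V} {f : V → V}
    (h : IsStarForest G (W \ insert c L) D f) (hc : c ∈ W) (hL : L ⊆ W) (hcL : c ∉ L)
    (hLne : L.Nonempty) (hadj : ∀ a ∈ L, G.Adj a c) :
    IsStarForest G W (L ∪ D) (fun x => if x ∈ L then c else f x) := by
  have hD : ∀ d ∈ D, d ∈ W ∧ d ≠ c ∧ d ∉ L := fun d hd => by
    simpa using h.subset hd
  refine ⟨fun d hd => ?_, fun d hd => ?_, fun d hd => ?_, fun p hp => ?_⟩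
  · rcases Finset.mem_union.mp hd with hd | hd
    exacts [hL hd, (hD d hd).1]
  · by_cases hdL : d ∈ L
    · simp only [hdL, if_true, Finset.mem_sdiff, Finset.mem_union, hcL, false_or]
      exact ⟨hc, fun hcD => (hD c hcD).2.1 rfl⟩
    · have hdD : d ∈ D := by simpa [hdL] using hd
      have hfd := h.mapsTo d hdD
      simp only [Finset.mem_sdiff, Finset.mem_insert, not_or] at hfd
      simp only [hdL, if_false, Finset.mem_sdiff, Finset.mem_union, not_or]
      exact ⟨hfd.1.1, hfd.1.2.2, hfd.2⟩
  · by_cases hdL : d ∈ L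
    · simpa [hdL] using hadj d hdL
    · simpa [hdL] using h.adj d (by simpa [hdL] using hd)
  · simp only [Finset.mem_sdiff, Finset.mem_union, not_or] at hp
    by_cases hpc : p = c
    · obtain ⟨a, ha⟩ := hLne
      exact ⟨a, Finset.mem_union_left _ ha, by simp [ha, hpc]⟩
    · obtain ⟨d, hd, rfl⟩ := h.surj p (by simp [hp, hpc])
      exact ⟨d, Finset.mem_union_right _ hd, by simp [(hD d hd).2.2]⟩

/-- Splitting off one star: `c` becomes a centre whose leaves are the other vertices of `S`
together with everything stranded by `S`. -/
lemma IsStarForest.exists_of_star {G : SimpleGraph V} {W S : Finset V} {c : V}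
    (hS : S ⊆ W) (hc : c ∈ S) (hleaf : ∃ a ∈ S ∪ strandedBy G W S, a ≠ c)
    (hadj : ∀ a ∈ S ∪ strandedBy G W S, a ≠ c → G.Adj a c)
    (h : ∃ D f, IsStarForest G (W \ (S ∪ strandedBy G W S)) D f) :
    ∃ D f, IsStarForest G W D f ∧ (∀ a ∈ S, a ≠ c → a ∈ D) ∧ c ∉ D := by
  obtain ⟨D, f, hf⟩ := h
  set L := (S ∪ strandedBy G W S).erase c
  have hL : L ⊆ W := fun a ha => by
    rcases Finset.mem_union.mp (Finset.mem_of_mem_erase ha) with ha | ha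
    exacts [hS ha, (mem_strandedBy.mp ha).1]
  have hLne : L.Nonempty := by
    obtain ⟨a, ha, hac⟩ := hleaf
    exact ⟨a, Finset.mem_erase.mpr ⟨hac, ha⟩⟩
  rw [← Finset.insert_erase (Finset.mem_union_left _ hc)] at hf
  have hstar := hf.addStar (hS hc) hL (Finset.notMem_erase c _) hLne fun a ha =>
    hadj a (Finset.mem_of_mem_erase ha) (Finset.ne_of_mem_erase ha)
  refine ⟨_, _, hstar, fun a ha hac => Finset.mem_union_left _ ?_, fun hcD => ?_⟩
  · exact Finset.mem_erase.mpr ⟨hac, Finset.mem_union_left _ ha⟩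
  · obtain ⟨a, ha⟩ := hLne
    have hca := hstar.mapsTo a (Finset.mem_union_left _ ha)
    rw [if_pos ha, Finset.mem_sdiff] at hca
    exact hca.2 hcD

theorem IsStarForest.exists (G : SimpleGraph V) {W : Finset V}
    (hW : ∀ w ∈ W, ∃ t ∈ W, G.Adj w t) : ∃ D f, IsStarForest G W D f := by
  induction W using Finset.strongInduction with
  | H W ih =>
  have hrest : ∀ S ⊆ W, S.Nonempty →
      ∃ D f, IsStarForest G (W \ (S ∪ strandedBy G W S)) D f := fun S hS ⟨s, hs⟩ =>
    ih _ (Finset.sdiff_ssubset (Finset.union_subset hS (Finset.filter_subset _ _))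
      ⟨s, Finset.mem_union_left _ hs⟩) fun a ha => exists_adj_sdiff_union_strandedBy G ha
  rcases W.eq_empty_or_nonempty with rfl | ⟨w, hw⟩
  · exact ⟨∅, id, by constructor <;> simp⟩
  by_cases hstr : (strandedBy G W {w}).Nonempty
  · obtain ⟨a, ha⟩ := hstr
    have hS : {w} ⊆ W := Finset.singleton_subset_iff.mpr hw
    have hadj : ∀ b ∈ {w} ∪ strandedBy G W {w}, b ≠ w → G.Adj b w := fun b hb hbw => by
      obtain ⟨hbW, -, hball⟩ := mem_strandedBy.mp (by simpa [hbw] using hb)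
      obtain ⟨t, ht, hbt⟩ := hW b hbW
      simpa [Finset.mem_singleton.mp (hball t ht hbt)] using hbt
    obtain ⟨D, f, hf, -⟩ := IsStarForest.exists_of_star hS (Finset.mem_singleton_self w)
      ⟨a, Finset.mem_union_right _ ha, by simpa using (mem_strandedBy.mp ha).2.1⟩ hadj
      (hrest _ hS ⟨w, Finset.mem_singleton_self w⟩)
    exact ⟨D, f, hf⟩
  · obtain ⟨t, ht, hwt⟩ := hW w hw
    have hS : {w, t} ⊆ W := Finset.insert_subset hw (Finset.singleton_subset_iff.mpr ht)
    have hadj : ∀ b ∈ {w, t} ∪ strandedBy G W {w, t}, b ≠ t → G.Adj b t := fun b hb hbt => by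
      rcases Finset.mem_union.mp hb with hb | hb
      · simpa [show b = w by simpa [hbt] using hb] using hwt
      obtain ⟨hbW, hbwt, hball⟩ := mem_strandedBy.mp hb
      have hb' : b ∉ strandedBy G W {w} := fun h => hstr ⟨b, h⟩
      simp only [mem_strandedBy, hbW, true_and, not_and, not_forall] at hb'
      obtain ⟨s, hs, hbs, hsw⟩ := hb' (by simp_all)
      obtain rfl : s = t := by simpa [Finset.mem_singleton.not.mp hsw] using hball s hs hbs
      exact hbs
    obtain ⟨D, f, hf, -⟩ := IsStarForest.exists_of_star hS (by simp) ⟨w, by simp, hwt.ne⟩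
      hadj (hrest _ hS ⟨w, by simp⟩)
    exact ⟨D, f, hf⟩

def starGraph (D : Finset V) (f : V → V) : SimpleGraph V :=
  SimpleGraph.fromRel fun a b => a ∈ D ∧ b = f a

lemma IsStarForest.isDPNash {G : SimpleGraph V} {D : Finset V} {f : V → V}
    (h : IsStarForest G Finset.univ D f) :
    IsDPNash G (fun _ => 1) D (Finset.univ \ D) (starGraph D f) := by
  have hfD : ∀ d ∈ D, f d ∉ D := fun d hd => (Finset.mem_sdiff.mp (h.mapsTo d hd)).2
  refine ⟨?_, Finset.union_sdiff_of_subset (Finset.subset_univ D), Finset.disjoint_sdiff,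
    ?_, fun p hp => ?_, fun x hx => ?_⟩
  · rintro a b ⟨-, ⟨ha, rfl⟩ | ⟨hb, rfl⟩⟩
    exacts [h.adj a ha, (h.adj b hb).symm]
  · rintro a b ⟨-, ⟨ha, rfl⟩ | ⟨hb, rfl⟩⟩
    exacts [Or.inl ⟨ha, h.mapsTo a ha⟩, Or.inr ⟨h.mapsTo b hb, hb⟩]
  · obtain ⟨d, hd, rfl⟩ := h.surj p hp
    exact deg_pos_iff.mpr ⟨d, fun hdd => hfD d hd (by rwa [hdd]), Or.inr ⟨hd, rfl⟩⟩
  · have hone : deg (starGraph D f) x = 1 := by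
      refine deg_eq_one_of_forall_adj_eq
        ⟨fun hx' => hfD x hx (by rwa [← hx']), Or.inl ⟨hx, rfl⟩⟩ ?_
      rintro z ⟨-, ⟨-, hz⟩ | ⟨hz, hxz⟩⟩
      exacts [hz, absurd (hxz ▸ hx) (hfD z hz)]
    rw [hone, min_eq_right (deg_pos_iff.mpr ⟨f x, h.adj x hx⟩)]

def HasUniqueDSet (G : SimpleGraph V) (κ : V → ℕ) : Prop :=
  ∀ (D₁ P₁ : Finset V) (H₁ : SimpleGraph V) (D₂ P₂ : Finset V) (H₂ : SimpleGraph V),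
    IsDPNash G κ D₁ P₁ H₁ → IsDPNash G κ D₂ P₂ H₂ → D₁ = D₂

/-- Star forests with `u` a leaf of `v` and with `v` a leaf of `u` have different leaf sets. -/
lemma not_hasUniqueDSet_of_adj {G : SimpleGraph V} {u v : V} (huv : G.Adj u v)
    (hstr : ∀ a ∈ strandedBy G Finset.univ {u, v}, G.Adj a u ∧ G.Adj a v) :
    ¬ HasUniqueDSet G (fun _ => 1) := by
  have hS : {u, v} ⊆ Finset.univ := Finset.subset_univ _
  have hrest := IsStarForest.exists G
    (W := Finset.univ \ ({u, v} ∪ strandedBy G Finset.univ {u, v}))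
    fun a ha => exists_adj_sdiff_union_strandedBy G ha
  obtain ⟨D₁, f₁, h₁, hu₁, -⟩ := IsStarForest.exists_of_star hS (c := v) (by simp)
    ⟨u, by simp, huv.ne⟩ (fun a ha hav => by
      rcases Finset.mem_union.mp ha with ha | ha
      exacts [by simpa [show a = u by simpa [hav] using ha] using huv, (hstr a ha).2])
    hrest
  obtain ⟨D₂, f₂, h₂, -, hu₂⟩ := IsStarForest.exists_of_star hS (c := u) (by simp)
    ⟨v, by simp, huv.ne'⟩ (fun a ha hau => by
      rcases Finset.mem_union.mp ha with ha | ha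
      exacts [by simpa [show a = v by simpa [hau] using ha] using huv.symm, (hstr a ha).1])
    hrest
  intro huniq
  exact hu₂ (huniq _ _ _ _ _ _ h₁.isDPNash h₂.isDPNash ▸ hu₁ u (by simp) huv.ne)

section DegreeOne

variable {G : SimpleGraph V}

lemma mem_X1 {x : V} : x ∈ X1 G ↔ deg G x = 1 := by simp [X1]

lemma mem_Y1 {y : V} : y ∈ Y1 G ↔ ∃ x, deg G x = 1 ∧ G.Adj x y := by simp [Y1, X1]

lemma mem_X1_union_Z1 {u : V} : u ∈ X1 G ∪ Z1 G ↔ u ∈ X1 G ∨ u ∉ Y1 G := by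
  simp only [Z1, Finset.mem_union, Finset.mem_sdiff, Finset.mem_univ, true_and]
  tauto

lemma mem_Y1_of_adj (hind : ∀ u ∈ X1 G ∪ Z1 G, ∀ v ∈ X1 G ∪ Z1 G, ¬ G.Adj u v) {u w : V}
    (hu : u ∈ X1 G ∪ Z1 G) (huw : G.Adj u w) : w ∈ Y1 G := by
  by_contra hw
  exact hind u hu w (mem_X1_union_Z1.mpr (Or.inr hw)) huw

lemma adj_of_mem_strandedBy_of_mem_X1_union_Z1 (hdeg : ∀ v, 1 ≤ deg G v) {u v a : V}
    (hv : v ∈ X1 G ∪ Z1 G) (huv : G.Adj u v) (ha : a ∈ strandedBy G Finset.univ {u, v}) :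
    G.Adj a u := by
  obtain ⟨-, hauv, hall⟩ := mem_strandedBy.mp ha
  by_contra hau
  have hav_only : ∀ b, G.Adj a b → b = v := fun b hab => by
    have hbu : b ≠ u := fun hbu => hau (hbu ▸ hab)
    simpa [hbu] using hall b (Finset.mem_univ b) hab
  obtain ⟨b, hab⟩ := deg_pos_iff.mp (hdeg a)
  have hav : G.Adj a v := hav_only b hab ▸ hab
  have ha1 : deg G a = 1 := deg_eq_one_of_forall_adj_eq hav hav_only
  have hv1 : deg G v = 1 := by
    rcases mem_X1_union_Z1.mp hv with hv | hv
    exacts [mem_X1.mp hv, absurd (mem_Y1.mpr ⟨a, ha1, hav⟩) hv]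
  exact hauv (by simp [eq_of_deg_eq_one hv1 huv.symm hav.symm])

lemma strandedBy_univ_pair_eq_empty (hdeg : ∀ v, 1 ≤ deg G v) {x y : V} (hx : deg G x = 1)
    (hxy : G.Adj x y) (huniq : ∀ x', deg G x' = 1 → G.Adj x' y → x' = x) :
    strandedBy G Finset.univ {x, y} = ∅ := by
  refine Finset.eq_empty_iff_forall_notMem.mpr fun a ha => ?_
  obtain ⟨-, haxy, hall⟩ := mem_strandedBy.mp ha
  simp only [Finset.mem_insert, Finset.mem_singleton, not_or] at haxy
  have hay_only : ∀ b, G.Adj a b → b = y := fun b hab => by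
    have hbx : b ≠ x := fun hbx => haxy.2 (eq_of_deg_eq_one hx (hbx ▸ hab.symm) hxy)
    simpa [hbx] using hall b (Finset.mem_univ b) hab
  obtain ⟨b, hab⟩ := deg_pos_iff.mp (hdeg a)
  have hay : G.Adj a y := hay_only b hab ▸ hab
  exact haxy.1 (huniq a (deg_eq_one_of_forall_adj_eq hay hay_only) hay)

lemma IsDPNash.exists_adj (hdeg : ∀ v, 1 ≤ deg G v) {D P : Finset V} {H : SimpleGraph V}
    (h : IsDPNash G (fun _ => 1) D P H) (v : V) : ∃ w, H.Adj v w := by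
  obtain ⟨-, hcov, -, -, hP, hD⟩ := h
  rcases Finset.mem_union.mp (hcov ▸ Finset.mem_univ v) with hv | hv
  · exact deg_pos_iff.mp (by rw [hD v hv]; exact lt_min (hdeg v) one_pos)
  · exact deg_pos_iff.mp (hP v hv)

lemma IsDPNash.adj_of_deg_eq_one (hdeg : ∀ v, 1 ≤ deg G v) {D P : Finset V}
    {H : SimpleGraph V} (h : IsDPNash G (fun _ => 1) D P H) {x y : V} (hx : deg G x = 1)
    (hxy : G.Adj x y) : H.Adj x y := by
  obtain ⟨w, hw⟩ := h.exists_adj hdeg x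
  exact eq_of_deg_eq_one hx (h.1 hw) hxy ▸ hw

/-- A vertex of `Y` in `D` would have to keep the edges to all its degree-one neighbours,
so its `H`-degree would be at least two; hence `Y ⊆ P`, which forces `X ∪ Z ⊆ D`. -/
lemma IsDPNash.eq_X1_union_Z1 (hdeg : ∀ v, 1 ≤ deg G v)
    (hind : ∀ u ∈ X1 G ∪ Z1 G, ∀ v ∈ X1 G ∪ Z1 G, ¬ G.Adj u v)
    (htwo : ∀ y ∈ Y1 G, 2 ≤ (nbrW G y (X1 G)).card)
    {D P : Finset V} {H : SimpleGraph V} (h : IsDPNash G (fun _ => 1) D P H) :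
    D = X1 G ∪ Z1 G := by
  obtain ⟨hle, -, -, hbip, -, hD⟩ := id h
  have hY : ∀ y ∈ Y1 G, y ∉ D := fun y hy hyD => by
    obtain ⟨x₁, hx₁, x₂, hx₂, hne⟩ := Finset.one_lt_card.mp (htwo y hy)
    simp only [nbrW, mem_X1, Finset.mem_filter, Finset.mem_univ, true_and] at hx₁ hx₂
    have hy1 : deg H y = 1 := by rw [hD y hyD]; exact min_eq_right (hdeg y)
    exact hne (eq_of_deg_eq_one hy1 (h.adj_of_deg_eq_one hdeg hx₁.2 hx₁.1.symm).symm
      (h.adj_of_deg_eq_one hdeg hx₂.2 hx₂.1.symm).symm)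
  ext u
  refine ⟨fun huD => ?_, fun hu => ?_⟩
  · by_contra hu
    exact hY u (by_contra fun hY => hu (mem_X1_union_Z1.mpr (Or.inr hY))) huD
  · by_contra huD
    obtain ⟨w, huw⟩ := h.exists_adj hdeg u
    have hwD : w ∉ D := hY w (mem_Y1_of_adj hind hu (hle huw))
    rcases hbip huw with ⟨hu', -⟩ | ⟨-, hw'⟩
    exacts [huD hu', hwD hw']

end DegreeOne

/-- For `κ ≡ 1`, all DP-Nash subgraphs have the same `D`-set iff `X ∪ Z` is
independent and every `y ∈ Y` has at least two neighbours in `X`. -/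
theorem stmt14 (G : SimpleGraph V) (hdeg : ∀ v, 1 ≤ deg G v) :
    (∀ (D₁ P₁ : Finset V) (H₁ : SimpleGraph V) (D₂ P₂ : Finset V) (H₂ : SimpleGraph V),
        IsDPNash G (fun _ => 1) D₁ P₁ H₁ → IsDPNash G (fun _ => 1) D₂ P₂ H₂ → D₁ = D₂) ↔
      ((∀ u ∈ X1 G ∪ Z1 G, ∀ v ∈ X1 G ∪ Z1 G, ¬ G.Adj u v) ∧
        ∀ y ∈ Y1 G, 2 ≤ (nbrW G y (X1 G)).card) := by
  constructor
  · intro huniq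
    have hind : ∀ u ∈ X1 G ∪ Z1 G, ∀ v ∈ X1 G ∪ Z1 G, ¬ G.Adj u v := fun u hu v hv huv =>
      not_hasUniqueDSet_of_adj huv (fun a ha =>
        ⟨adj_of_mem_strandedBy_of_mem_X1_union_Z1 hdeg hv huv ha,
          adj_of_mem_strandedBy_of_mem_X1_union_Z1 hdeg hu huv.symm
            (by rwa [Finset.pair_comm])⟩) huniq
    refine ⟨hind, fun y hy => ?_⟩
    by_contra hlt
    obtain ⟨x, hx, hxy⟩ := mem_Y1.mp hy
    have hxuniq : ∀ x', deg G x' = 1 → G.Adj x' y → x' = x := fun x' hx' hx'y =>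
      Finset.card_le_one.mp (show (nbrW G y (X1 G)).card ≤ 1 by omega)
        x' (by simp [nbrW, mem_X1, hx', hx'y.symm]) x (by simp [nbrW, mem_X1, hx, hxy.symm])
    refine not_hasUniqueDSet_of_adj hxy (fun a ha => ?_) huniq
    simp [strandedBy_univ_pair_eq_empty hdeg hx hxy hxuniq] at ha
  · rintro ⟨hind, htwo⟩ D₁ P₁ H₁ D₂ P₂ H₂ h₁ h₂
    rw [h₁.eq_X1_union_Z1 hdeg hind htwo, h₂.eq_X1_union_Z1 hdeg hind htwo]
end
end

section
/- If κ(v) = d_G(v) for every v ∈ V(G), then the D-set of every DP-Nash subgraph of (G,κ) is a maximal independent set of G, and conversely every maximal independent set of G is the D-set of some DP-Nash subgraph. -/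
open Finset
open scoped Classical

noncomputable section

variable {V : Type*} [Fintype V]

/-- When `κ(v) = d_G(v)` for every vertex, the `D`-set of every DP-Nash
subgraph is a maximal independent set of `G`, and conversely every maximal
independent set is the `D`-set of some DP-Nash subgraph. -/
theorem stmt15 (G : SimpleGraph V) :
    (∀ (D P : Finset V) (H : SimpleGraph V), IsDPNash G (deg G) D P H →
        (∀ u ∈ D, ∀ v ∈ D, ¬ G.Adj u v) ∧ ∀ v ∉ D, ∃ u ∈ D, G.Adj u v) ∧
      ∀ S : Finset V, (∀ u ∈ S, ∀ v ∈ S, ¬ G.Adj u v) → (∀ v ∉ S, ∃ u ∈ S, G.Adj u v) →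
        ∃ (P : Finset V) (H : SimpleGraph V), IsDPNash G (deg G) S P H := by
  constructor
  · rintro D P H ⟨hle, hunion, hdisj, hbip, hP, hD⟩
    -- key: for x ∈ D, H.Adj x y ↔ G.Adj x y
    have key : ∀ x ∈ D, ∀ y, G.Adj x y → H.Adj x y := by
      intro x hx y hxy
      have hsub : (Finset.univ.filter fun y => H.Adj x y) ⊆
          (Finset.univ.filter fun y => G.Adj x y) := by
        intro z hz
        simp only [Finset.mem_filter, Finset.mem_univ, true_and] at hz ⊢
        exact hle hz
      have hcard : deg H x = deg G x := by
        have := hD x hx; simpa using this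
      have heq := Finset.eq_of_subset_of_card_le hsub (le_of_eq hcard.symm)
      have : y ∈ (Finset.univ.filter fun y => H.Adj x y) := by
        rw [heq]; simp [hxy]
      simpa using this
    constructor
    · intro u hu v hv hadj
      have hH := key u hu v hadj
      rcases hbip hH with ⟨_, hvP⟩ | ⟨huP, _⟩
      · exact (Finset.disjoint_left.mp hdisj hv) hvP
      · exact (Finset.disjoint_left.mp hdisj hu) huP
    · intro v hv
      have hvP : v ∈ P := by
        have : v ∈ D ∪ P := hunion ▸ Finset.mem_univ v
        rcases Finset.mem_union.mp this with h | h
        · exact absurd h hv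
        · exact h
      have hpos := hP v hvP
      rw [deg, Finset.card_pos] at hpos
      obtain ⟨u, hu⟩ := hpos
      simp only [Finset.mem_filter, Finset.mem_univ, true_and] at hu
      rcases hbip hu with ⟨hvD, _⟩ | ⟨_, huD⟩
      · exact absurd hvD (Finset.disjoint_right.mp hdisj hvP)
      · exact ⟨u, huD, (hle hu).symm⟩
  · intro S hind hdom
    refine ⟨Finset.univ \ S,
      { Adj := fun u v => G.Adj u v ∧ ((u ∈ S ∧ v ∉ S) ∨ (u ∉ S ∧ v ∈ S))
        symm := by
          constructor
          intro u v h
          exact ⟨h.1.symm, by tauto⟩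
        loopless := by
          constructor
          intro u h
          exact G.irrefl h.1 }, ?_⟩
    refine ⟨?_, ?_, ?_, ?_, ?_, ?_⟩
    · intro u v h; exact h.1
    · simp [Finset.union_sdiff_self_eq_union]
    · exact Finset.disjoint_sdiff
    · intro u v huv
      rcases huv.2 with ⟨h1, h2⟩ | ⟨h1, h2⟩
      · left; exact ⟨h1, by simp [h2]⟩
      · right; exact ⟨by simp [h1], h2⟩
    · intro v hv
      simp only [Finset.mem_sdiff, Finset.mem_univ, true_and] at hv
      obtain ⟨u, hu, hadj⟩ := hdom v hv
      rw [deg, Finset.card_pos]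
      exact ⟨u, by simp only [Finset.mem_filter, Finset.mem_univ, true_and,
        SimpleGraph.Adj]; exact ⟨hadj.symm, Or.inr ⟨hv, hu⟩⟩⟩
    · intro x hx
      rw [min_self]
      unfold deg
      congr 1
      ext y
      simp only [Finset.mem_filter, Finset.mem_univ, true_and]
      constructor
      · exact fun h => h.1
      · intro h
        refine ⟨h, Or.inl ⟨hx, fun hy => hind x hx y hy h⟩⟩
end
end

section
/- Let (G,κ) be a capacitated graph with κ(x) ≤ d_G(x) for all x and X ∪ Z independent. In the proof of the characterization, Claim C holds: if (D, P; E') is any DP-Nash subgraph with W := Y^{κ>0} ∩ D nonempty, then L(W) ⊆ P and consequently |L(W)| ≤ Σ_{w∈W} κ(w). -/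
open Finset
open scoped Classical

noncomputable section

variable {V : Type*} [Fintype V]

/-- Claim C of the characterisation: for any DP-Nash subgraph `(D, P; H)` with
`W := Y^{κ>0} ∩ D` nonempty, we have `L(W) ⊆ P` and `|L(W)| ≤ Σ_{w ∈ W} κ w`. -/
theorem stmt17 (G : SimpleGraph V) (κ : V → ℕ) (hκ : ∀ v, κ v ≤ deg G v)
    (hind : ∀ u ∈ XX G κ ∪ ZZ G κ, ∀ v ∈ XX G κ ∪ ZZ G κ, ¬ G.Adj u v)
    (D P : Finset V) (H : SimpleGraph V) (hNash : IsDPNash G κ D P H)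
    (hW : (Ypos G κ ∩ D).Nonempty) :
    LL G κ (Ypos G κ ∩ D) ⊆ P ∧
      (LL G κ (Ypos G κ ∩ D)).card ≤ ∑ w ∈ Ypos G κ ∩ D, κ w := by

  obtain ⟨hHG, hDP, hdisj, hbip, hPdeg, hDdeg⟩ := hNash
  set W := Ypos G κ ∩ D with hWdef
  have hdegW : ∀ w ∈ W, deg H w = κ w := by
    intro w hw
    have hwD : w ∈ D := (Finset.mem_inter.1 hw).2
    rw [hDdeg w hwD, min_eq_right (hκ w)]
  have hsub : LL G κ W ⊆ P := by
    intro x hx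
    simp only [LL, Finset.mem_filter] at hx
    obtain ⟨hxXZ, hxlt⟩ := hx
    by_contra hxP
    have hxD : x ∈ D := by
      have hxu : x ∈ D ∪ P := hDP ▸ Finset.mem_univ x
      rcases Finset.mem_union.1 hxu with h | h
      · exact h
      · exact absurd h hxP
    have hdx : deg H x = κ x := by rw [hDdeg x hxD, min_eq_right (hκ x)]
    have hsub2 : (Finset.univ.filter fun y => H.Adj x y) ⊆
        (Finset.univ.filter fun y => G.Adj x y ∧ y ∉ W) := by
      intro y hy
      simp only [Finset.mem_filter, Finset.mem_univ, true_and] at hy ⊢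
      refine ⟨hHG hy, ?_⟩
      rcases hbip hy with ⟨_, hyP⟩ | ⟨hxP', _⟩
      · intro hyW
        exact (Finset.disjoint_left.1 hdisj (Finset.mem_inter.1 hyW).2) hyP
      · exact absurd hxP' hxP
    have hcard : deg H x ≤ ((Finset.univ.filter fun y => G.Adj x y ∧ y ∉ W)).card :=
      Finset.card_le_card hsub2
    have hpart : (nbrW G x W).card +
        ((Finset.univ.filter fun y => G.Adj x y ∧ y ∉ W)).card = deg G x := by
      have h1 : nbrW G x W = (Finset.univ.filter fun y => G.Adj x y).filter (fun y => y ∈ W) := by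
        simp [nbrW, Finset.filter_filter]
      have h2 : (Finset.univ.filter fun y => G.Adj x y ∧ y ∉ W) =
          (Finset.univ.filter fun y => G.Adj x y).filter (fun y => ¬ y ∈ W) := by
        simp [Finset.filter_filter]
      rw [h1, h2, Finset.card_filter_add_card_filter_not]
      rfl
    have hκd := hκ x
    omega
  have hbi : LL G κ W ⊆ W.biUnion (fun w => Finset.univ.filter fun z => H.Adj w z) := by
    intro x hx
    have hxP := hsub hx
    have hxXZ : x ∈ XX G κ ∪ ZZ G κ := by
      simp only [LL, Finset.mem_filter] at hx
      exact hx.1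
    have hxd : 0 < (Finset.univ.filter fun y => H.Adj x y).card := hPdeg x hxP
    obtain ⟨y, hy⟩ := Finset.card_pos.1 hxd
    simp only [Finset.mem_filter, Finset.mem_univ, true_and] at hy
    have hyD : y ∈ D := by
      rcases hbip hy with ⟨hxD, _⟩ | ⟨_, hyD⟩
      · exact absurd hxP (Finset.disjoint_left.1 hdisj hxD)
      · exact hyD
    have hGxy : G.Adj x y := hHG hy
    have hyXZ : y ∉ XX G κ ∪ ZZ G κ := fun hyXZ => hind x hxXZ y hyXZ hGxy
    have hyY : y ∈ YY G κ := by
      have hyX : y ∉ XX G κ := fun h => hyXZ (Finset.mem_union_left _ h)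
      have hyZ : y ∉ ZZ G κ := fun h => hyXZ (Finset.mem_union_right _ h)
      simp only [ZZ, Finset.mem_sdiff, Finset.mem_univ, true_and, not_not] at hyZ
      rcases Finset.mem_union.1 hyZ with h | h
      · exact absurd h hyX
      · exact h
    have hκy : 0 < κ y := by
      have hpos : 0 < deg H y := by
        apply Finset.card_pos.2
        exact ⟨x, by simp [hy.symm]⟩
      rwa [hDdeg y hyD, min_eq_right (hκ y)] at hpos
    have hyW : y ∈ W := Finset.mem_inter.2 ⟨Finset.mem_filter.2 ⟨hyY, hκy⟩, hyD⟩
    exact Finset.mem_biUnion.2 ⟨y, hyW, by simp [hy.symm]⟩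
  refine ⟨hsub, ?_⟩
  calc (LL G κ W).card ≤ (W.biUnion fun w => Finset.univ.filter fun z => H.Adj w z).card :=
        Finset.card_le_card hbi
    _ ≤ ∑ w ∈ W, (Finset.univ.filter fun z => H.Adj w z).card := Finset.card_biUnion_le
    _ = ∑ w ∈ W, κ w := Finset.sum_congr rfl fun w hw => hdegW w hw
end
end

section
/- For n ≥ 1, let K_{3n} be the complete graph on 3n vertices with κ(v) = 2 for all v. Then every subset S of the vertices with n ≤ |S| ≤ 3n − 2 is the D-set of some DP-Nash subgraph of (K_{3n}, κ). -/
/-! Each vertex of `S` must choose two neighbours in the complement `P`, and the choices must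
cover `P`. In a complete graph such choices exist as soon as `2 ≤ |P| ≤ 2|S|`, which is what
`n ≤ |S| ≤ 3n - 2` says: go through `S` one vertex at a time, letting each take up to two
still uncovered vertices of `P`, padded with arbitrary vertices of `P`. -/

open Finset
open scoped Classical

noncomputable section

variable {V : Type*} [Fintype V]

theorem exists_card_eq_subsets_cover {ι α : Type*} {k : ℕ} {A : Finset α} (hA : k ≤ #A)
    (S : Finset ι) {P : Finset α} (hPA : P ⊆ A) (hP : #P ≤ k * #S) :
    ∃ N : ι → Finset α, (∀ i ∈ S, N i ⊆ A ∧ #(N i) = k) ∧ ∀ p ∈ P, ∃ i ∈ S, p ∈ N i := by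
  induction S using Finset.induction_on generalizing P with
  | empty =>
    rw [card_empty, mul_zero, Nat.le_zero, card_eq_zero] at hP
    exact ⟨fun _ => ∅, by simp, by simp [hP]⟩
  | insert i S hi ih =>
    obtain ⟨T, hTP, hT⟩ := exists_subset_card_eq (min_le_right k #P)
    obtain ⟨U, hTU, hUA, hU⟩ :=
      exists_subsuperset_card_eq (hTP.trans hPA) (hT.trans_le (min_le_left _ _)) hA
    rw [card_insert_of_notMem hi, mul_add_one] at hP
    obtain ⟨N, hN, hcover⟩ := ih (P := P \ T) (sdiff_subset.trans hPA)
      (by rw [card_sdiff_of_subset hTP]; omega)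
    have hupdate : ∀ j ∈ S, Function.update N i U j = N j := fun j hj =>
      Function.update_of_ne (ne_of_mem_of_not_mem hj hi) _ _
    refine ⟨Function.update N i U, ?_, ?_⟩
    · intro j hj
      rcases mem_insert.1 hj with rfl | hj
      · simpa using ⟨hUA, hU⟩
      · rw [hupdate j hj]
        exact hN j hj
    · intro p hp
      by_cases hpT : p ∈ T
      · exact ⟨i, mem_insert_self _ _, by simpa using hTU hpT⟩
      · obtain ⟨j, hj, hpj⟩ := hcover p (mem_sdiff.2 ⟨hp, hpT⟩)
        exact ⟨j, mem_insert_of_mem hj, by rwa [hupdate j hj]⟩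

theorem card_le_deg {G : SimpleGraph V} {x : V} {N : Finset V} (hN : ∀ y ∈ N, G.Adj x y) :
    #N ≤ deg G x :=
  card_le_card fun y hy => mem_filter.2 ⟨mem_univ y, hN y hy⟩

theorem exists_isDPNash_of_cover (G : SimpleGraph V) (κ : V → ℕ) (D : Finset V)
    (N : V → Finset V) (hN : ∀ x ∈ D, ∀ y ∈ N x, y ∉ D ∧ G.Adj x y)
    (hNκ : ∀ x ∈ D, #(N x) = min (deg G x) (κ x)) (hcover : ∀ p ∉ D, ∃ x ∈ D, p ∈ N x) :
    ∃ P H, IsDPNash G κ D P H := by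
  let H := SimpleGraph.fromRel fun x y => x ∈ D ∧ y ∈ N x
  have hH : ∀ {u v}, H.Adj u v → (u ∈ D ∧ v ∈ N u) ∨ (v ∈ D ∧ u ∈ N v) := fun h => h.2
  have hadj : ∀ {x y}, x ∈ D → y ∈ N x → H.Adj x y := fun hx hy =>
    ⟨fun h => (hN _ hx _ hy).1 (h ▸ hx), Or.inl ⟨hx, hy⟩⟩
  have hdeg : ∀ x ∈ D, deg H x = #(N x) := by
    intro x hx
    unfold deg
    congr 1
    ext y
    simp only [mem_filter, mem_univ, true_and]
    refine ⟨fun h => ?_, hadj hx⟩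
    rcases hH h with ⟨-, hy⟩ | ⟨hy, hxy⟩
    · exact hy
    · exact absurd hx (hN y hy x hxy).1
  refine ⟨Dᶜ, H, ?_, union_compl D, disjoint_compl_right, ?_, ?_, ?_⟩
  · intro u v h
    rcases hH h with ⟨hu, hv⟩ | ⟨hv, hu⟩
    · exact (hN u hu v hv).2
    · exact (hN v hv u hu).2.symm
  · intro u v h
    rcases hH h with ⟨hu, hv⟩ | ⟨hv, hu⟩
    · exact Or.inl ⟨hu, mem_compl.2 (hN u hu v hv).1⟩
    · exact Or.inr ⟨mem_compl.2 (hN v hv u hu).1, hv⟩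
  · intro p hp
    obtain ⟨x, hx, hpx⟩ := hcover p (mem_compl.1 hp)
    exact card_pos.2 ⟨x, by simpa using (hadj hx hpx).symm⟩
  · intro x hx
    rw [hdeg x hx, hNκ x hx]

/-- In the complete graph `K_{3n}` with all capacities `2`, every vertex set
`S` with `n ≤ |S| ≤ 3n - 2` is the `D`-set of some DP-Nash subgraph. -/
theorem stmt18 (n : ℕ) (hn : 1 ≤ n) (S : Finset (Fin (3 * n)))
    (h1 : n ≤ S.card) (h2 : S.card ≤ 3 * n - 2) :
    ∃ (P : Finset (Fin (3 * n))) (H : SimpleGraph (Fin (3 * n))),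
      IsDPNash (⊤ : SimpleGraph (Fin (3 * n))) (fun _ => 2) S P H := by
  have hSc : 2 ≤ #Sᶜ ∧ #Sᶜ ≤ 2 * #S := by
    rw [card_compl, Fintype.card_fin]
    omega
  obtain ⟨N, hN, hcover⟩ := exists_card_eq_subsets_cover hSc.1 S subset_rfl hSc.2
  have hNS : ∀ x ∈ S, ∀ y ∈ N x, y ∉ S ∧ (⊤ : SimpleGraph _).Adj x y := fun x hx y hy =>
    have hyS : y ∉ S := mem_compl.1 ((hN x hx).1 hy)
    ⟨hyS, ne_of_mem_of_not_mem hx hyS⟩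
  refine exists_isDPNash_of_cover _ _ S N hNS (fun x hx => ?_)
    (fun p hp => hcover p (mem_compl.2 hp))
  have hdeg := card_le_deg fun y hy => (hNS x hx y hy).2
  have hcard := (hN x hx).2
  omega
end
end
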